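/- Let L and J be positive integers, and let x₁, …, x_J be real numbers such that ‖x_j‖ ≥ 1/L for every j = 1, …, J. Then ∑_{l=1}^{L} | ∑_{j=1}^{J} e(l·x_j) | > J/6. -/

import Mathlib

open Finset

/-- e(x) = e^{2πix}. -/
noncomputable def e (x : ℝ) : ℂ := Complex.exp (2 * Real.pi * Complex.I * x)

/-- ‖x‖ : the distance from `x` to the nearest integer. -/
noncomputable def distNearestInt (x : ℝ) : ℝ := |x - round x|

/-
Put ϑ = π/(L+1) and B(t) = ∑_{k<L} sin((k+1)ϑ) e(kt). The sine weights solve the three-term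
recurrence of sin, so (2 cos ϑ z - z² - 1) B = -sin ϑ (1 + z^{L+1}) at z = e(t). Multiplying by
conj(z B) shows that (2 cos ϑ - 2 cos 2πt) |B(t)|² has only the frequencies ±1, …, ±L, with
coefficients of size at most sin ϑ; summed over the x_j it is therefore at most 2 sin ϑ Σ, where
Σ = ∑_{l=1}^{L} |∑_j e(l x_j)|. The separation ‖x_j‖ ≥ 1/L gives
cos 2πx_j ≤ cos(2π/L) ≤ cos 2ϑ ≤ cos ϑ - sin² ϑ, hence sin ϑ ∑_j |B(x_j)|² ≤ Σ. Expanding |B|²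
instead, the diagonal contributes (∑_k sin²((k+1)ϑ)) J = (L+1) J / 2 and the off-diagonal terms at
most 2 L Σ. Together with Jordan's inequality sin ϑ ≥ 2/(L+1) this forces Σ > J/6.
-/

open Real ComplexConjugate

lemma e_eq_exp_mul_I (t : ℝ) : e t = Complex.exp ((2 * π * t : ℝ) * Complex.I) := by
  unfold e; push_cast; ring_nf

lemma e_add (s t : ℝ) : e (s + t) = e s * e t := by
  simp only [e_eq_exp_mul_I, ← Complex.exp_add]; push_cast; ring_nf

lemma e_zero : e 0 = 1 := by simp [e]

lemma e_neg (t : ℝ) : e (-t) = conj (e t) := by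
  simp only [e_eq_exp_mul_I, ← Complex.exp_conj, map_mul, Complex.conj_ofReal, Complex.conj_I]
  push_cast; ring_nf

lemma e_natCast_mul (n : ℕ) (t : ℝ) : e (n * t) = e t ^ n := by
  simp only [e_eq_exp_mul_I, ← Complex.exp_nat_mul]; push_cast; ring_nf

lemma e_mul_conj (t : ℝ) : e t * conj (e t) = 1 := by
  rw [← e_neg, ← e_add, add_neg_cancel, e_zero]

lemma e_add_conj (t : ℝ) : e t + conj (e t) = (2 * cos (2 * π * t) : ℝ) := by
  rw [Complex.add_conj, e_eq_exp_mul_I, Complex.exp_ofReal_mul_I_re]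

noncomputable def expSum {ι : Type*} [Fintype ι] (x : ι → ℝ) (t : ℝ) : ℂ := ∑ j, e (t * x j)

section ExpSum

variable {ι : Type*} [Fintype ι] (x : ι → ℝ)

lemma expSum_zero : expSum x 0 = Fintype.card ι := by simp [expSum, e_zero]

lemma norm_expSum_neg (t : ℝ) : ‖expSum x (-t)‖ = ‖expSum x t‖ := by
  simp only [expSum, neg_mul, e_neg, ← map_sum, Complex.norm_conj]

lemma norm_expSum_abs (t : ℝ) : ‖expSum x |t|‖ = ‖expSum x t‖ := by
  rcases abs_choice t with h | h <;> rw [h]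
  exact norm_expSum_neg x t

end ExpSum

lemma sum_comp_le_sum_of_injOn {α β : Type*} [DecidableEq β] {s : Finset α} {t : Finset β}
    {h : β → ℝ} (hh : ∀ b, 0 ≤ h b) (i : α → β) (hi : Set.InjOn i s) (hst : ∀ a ∈ s, i a ∈ t) :
    ∑ a ∈ s, h (i a) ≤ ∑ b ∈ t, h b := by
  rw [← sum_image hi]
  exact sum_le_sum_of_subset_of_nonneg (by simpa [image_subset_iff] using hst)
    fun b _ _ ↦ hh b

lemma sum_erase_range_natAbs_sub_le {h : ℕ → ℝ} (hh : ∀ n, 0 ≤ h n) {k L : ℕ} (hk : k < L) :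
    ∑ k' ∈ (range L).erase k, h ((k : ℤ) - k').natAbs ≤ 2 * ∑ l ∈ Icc 1 L, h l := by
  rw [← sum_filter_add_sum_filter_not _ (· < k), two_mul]
  gcongr <;>
  · refine sum_comp_le_sum_of_injOn hh _ (fun a ha b hb hab ↦ ?_) fun a ha ↦ ?_
    · simp only [mem_coe, mem_filter, mem_erase, mem_range] at ha hb
      omega
    · simp only [mem_filter, mem_erase, mem_range] at ha
      simp only [mem_Icc]
      omega

lemma sum_Icc_one_eq_sum_range {M : Type*} [AddCommMonoid M] (h : ℕ → M) (L : ℕ) :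
    ∑ l ∈ Icc 1 L, h l = ∑ k ∈ range L, h (k + 1) := by
  rw [range_eq_Ico, sum_Ico_add', zero_add, Ico_add_one_right_eq_Icc]

lemma sum_range_sub_eq_sum_Icc {M : Type*} [AddCommMonoid M] (h : ℕ → M) (L : ℕ) :
    ∑ k ∈ range L, h (L - k) = ∑ l ∈ Icc 1 L, h l := by
  rw [sum_Icc_one_eq_sum_range, ← sum_range_reflect]
  exact sum_congr rfl fun k hk ↦ by rw [mem_range] at hk; congr 1; omega

noncomputable def trigPoly (c : ℕ → ℝ) (L : ℕ) (t : ℝ) : ℂ := ∑ k ∈ range L, (c k : ℂ) * e (k * t)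

section TrigPoly

variable {ι : Type*} [Fintype ι] (x : ι → ℝ) (c : ℕ → ℝ) (L : ℕ)

lemma normSq_trigPoly (t : ℝ) :
    (Complex.normSq (trigPoly c L t) : ℂ) =
      ∑ k ∈ range L, ∑ k' ∈ range L, ((c k * c k' : ℝ) : ℂ) * e ((k - k') * t) := by
  rw [← Complex.mul_conj, trigPoly, map_sum, sum_mul_sum]
  refine sum_congr rfl fun k _ ↦ sum_congr rfl fun k' _ ↦ ?_
  rw [map_mul, Complex.conj_ofReal, ← e_neg, sub_mul, sub_eq_add_neg, e_add]
  push_cast; ring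

lemma sum_normSq_trigPoly :
    ∑ j, Complex.normSq (trigPoly c L (x j)) =
      ∑ k ∈ range L, ∑ k' ∈ range L, c k * c k' * (expSum x (k - k')).re := by
  have h : (∑ j, Complex.normSq (trigPoly c L (x j)) : ℂ) =
      ∑ k ∈ range L, ∑ k' ∈ range L, ((c k * c k' : ℝ) : ℂ) * expSum x (k - k') := by
    simp only [normSq_trigPoly, expSum, mul_sum]
    rw [sum_comm]
    exact sum_congr rfl fun k _ ↦ sum_comm
  simpa only [Complex.re_sum, Complex.re_ofReal_mul, Complex.ofReal_re] using
    congrArg Complex.re h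

variable {c}

lemma le_sum_normSq_trigPoly (hc : ∀ k, |c k| ≤ 1) :
    (∑ k ∈ range L, c k ^ 2) * Fintype.card ι - 2 * L * ∑ l ∈ Icc 1 L, ‖expSum x l‖ ≤
      ∑ j, Complex.normSq (trigPoly c L (x j)) := by
  have hrow : ∀ k ∈ range L, c k ^ 2 * Fintype.card ι - 2 * ∑ l ∈ Icc 1 L, ‖expSum x l‖ ≤
      ∑ k' ∈ range L, c k * c k' * (expSum x (k - k')).re := by
    intro k hk
    have hoff : ∀ k' ∈ (range L).erase k,
        -‖expSum x ((k : ℤ) - k').natAbs‖ ≤ c k * c k' * (expSum x (k - k')).re := by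
      intro k' _
      rw [Nat.cast_natAbs, Int.cast_abs]
      push_cast
      rw [norm_expSum_abs]
      refine (abs_le.mp ?_).1
      rw [abs_mul, abs_mul]
      calc |c k| * |c k'| * |(expSum x (k - k')).re|
          ≤ 1 * 1 * ‖expSum x (k - k')‖ := by
            gcongr
            exacts [hc k, hc k', Complex.abs_re_le_norm _]
        _ = _ := by ring
    have hdiag : c k * c k * (expSum x (k - k)).re = c k ^ 2 * Fintype.card ι := by
      rw [sub_self, expSum_zero, Complex.natCast_re, sq]
    rw [← add_sum_erase _ _ hk, hdiag, sub_eq_add_neg]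
    gcongr
    refine le_trans ?_ (sum_le_sum hoff)
    rw [sum_neg_distrib, neg_le_neg_iff]
    exact sum_erase_range_natAbs_sub_le (h := fun n ↦ ‖expSum x n‖) (fun n ↦ norm_nonneg _)
      (mem_range.mp hk)
  rw [sum_normSq_trigPoly]
  refine le_trans (le_of_eq ?_) (sum_le_sum hrow)
  rw [sum_sub_distrib, sum_mul, sum_const, card_range, nsmul_eq_mul]
  ring

end TrigPoly

lemma two_sin_mul_sum_range_cos (ϑ : ℝ) (n : ℕ) :
    2 * sin ϑ * ∑ k ∈ range n, cos (2 * (k + 1) * ϑ) = sin ((2 * n + 1) * ϑ) - sin ϑ := by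
  induction n with
  | zero => simp
  | succ n ih =>
    rw [sum_range_succ, mul_add, ih, two_mul_sin_mul_cos,
      show ϑ - 2 * ((n : ℝ) + 1) * ϑ = -((2 * n + 1) * ϑ) by ring, sin_neg]
    push_cast
    ring_nf

lemma quadratic_mul_sum_sin_mul_pow (ϑ : ℝ) (z : ℂ) (n : ℕ) :
    (2 * cos ϑ * z - z ^ 2 - 1) * ∑ k ∈ range n, (sin ((k + 1) * ϑ) : ℂ) * z ^ k =
      -sin ϑ + sin ((n + 1) * ϑ) * z ^ n - sin (n * ϑ) * z ^ (n + 1) := by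
  induction n with
  | zero => simp
  | succ n ih =>
    have hrec : sin ((n + 1 + 1) * ϑ) = 2 * cos ϑ * sin ((n + 1) * ϑ) - sin (n * ϑ) := by
      rw [show (n + 1 + 1) * ϑ = (n + 1) * ϑ + ϑ by ring,
        show n * ϑ = (n + 1) * ϑ - ϑ by ring, sin_add, sin_sub]
      ring
    rw [sum_range_succ, mul_add, ih, Nat.cast_succ, hrec]
    push_cast
    ring

lemma two_div_le_sin_pi_div {L : ℕ} (hL : 0 < L) : 2 / (L + 1) ≤ sin (π / (L + 1)) := by
  have hL1 : (1 : ℝ) ≤ L := Nat.one_le_cast.mpr hL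
  have := mul_le_sin (x := π / (L + 1)) (by positivity)
    (div_le_div_of_nonneg_left pi_pos.le two_pos (by linarith))
  rwa [← mul_div_assoc, div_mul_cancel₀ _ pi_ne_zero] at this

lemma sin_pi_div_pos {L : ℕ} (hL : 0 < L) : 0 < sin (π / (L + 1)) :=
  lt_of_lt_of_le (by positivity) (two_div_le_sin_pi_div hL)

noncomputable def sinWeight (L k : ℕ) : ℝ := sin ((k + 1) * (π / (L + 1)))

lemma abs_sinWeight_le_one (L k : ℕ) : |sinWeight L k| ≤ 1 := abs_sin_le_one _

lemma sum_sinWeight_sq {L : ℕ} (hL : 0 < L) : ∑ k ∈ range L, sinWeight L k ^ 2 = (L + 1) / 2 := by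
  set ϑ := π / (L + 1) with hϑ
  have hϑπ : (L + 1) * ϑ = π := by rw [hϑ]; field_simp
  have hsin : 0 < sin ϑ := sin_pi_div_pos hL
  have hcos : ∑ k ∈ range L, cos (2 * (k + 1) * ϑ) = -1 := by
    have h := two_sin_mul_sum_range_cos ϑ L
    rw [show (2 * L + 1) * ϑ = 2 * π - ϑ by linarith, sin_two_pi_sub] at h
    nlinarith
  simp only [sinWeight, sin_sq, cos_sq, ← hϑ]
  have : ∀ k : ℕ, 2 * ((k + 1) * ϑ) = 2 * (k + 1) * ϑ := fun k ↦ by ring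
  simp only [this, sum_sub_distrib, sum_add_distrib, ← sum_div, hcos, sum_const, card_range,
    nsmul_eq_mul]
  ring

lemma quadratic_mul_sum_sinWeight_mul_pow (L : ℕ) (z : ℂ) :
    (2 * cos (π / (L + 1)) * z - z ^ 2 - 1) * ∑ k ∈ range L, (sinWeight L k : ℂ) * z ^ k =
      -sin (π / (L + 1)) * (1 + z ^ (L + 1)) := by
  have hϑπ : (L + 1) * (π / (L + 1)) = π := by field_simp
  have hsinL : sin (L * (π / (L + 1))) = sin (π / (L + 1)) := by
    rw [show L * (π / (L + 1)) = π - π / (L + 1) by linarith, sin_pi_sub]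
  simp only [sinWeight]
  rw [quadratic_mul_sum_sin_mul_pow, hϑπ, sin_pi, hsinL]
  push_cast
  ring

lemma two_cos_sub_mul_normSq_trigPoly_sinWeight (L : ℕ) (t : ℝ) :
    (((2 * cos (π / (L + 1)) - 2 * cos (2 * π * t)) *
        Complex.normSq (trigPoly (sinWeight L) L t) : ℝ) : ℂ) =
      -sin (π / (L + 1)) *
        ∑ k ∈ range L, (sinWeight L k : ℂ) * (e (-(k + 1) * t) + e ((L - k) * t)) := by
  set z := e t
  have hP : trigPoly (sinWeight L) L t = ∑ k ∈ range L, (sinWeight L k : ℂ) * z ^ k := by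
    simp only [trigPoly, e_natCast_mul, z]
  have hQ : conj (trigPoly (sinWeight L) L t) =
      ∑ k ∈ range L, (sinWeight L k : ℂ) * conj z ^ k := by
    simp only [hP, map_sum, map_mul, map_pow, Complex.conj_ofReal]
  have hRHS : ∑ k ∈ range L, (sinWeight L k : ℂ) * (e (-(k + 1) * t) + e ((L - k) * t)) =
      (conj z + z ^ L) * conj (trigPoly (sinWeight L) L t) := by
    rw [hQ, mul_sum]
    refine sum_congr rfl fun k _ ↦ ?_
    rw [show -((k : ℝ) + 1) * t = -((k + 1 : ℕ) * t) by push_cast; ring,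
      show ((L : ℝ) - k) * t = L * t + -(k * t) by ring, e_add, e_neg, e_neg, e_natCast_mul,
      e_natCast_mul, e_natCast_mul, map_pow, map_pow]
    ring
  have hid := quadratic_mul_sum_sinWeight_mul_pow L z
  rw [← hP] at hid
  rw [hRHS, Complex.ofReal_mul, Complex.ofReal_sub, ← e_add_conj, ← Complex.mul_conj,
    Complex.ofReal_mul, Complex.ofReal_ofNat]
  linear_combination (conj z * conj (trigPoly (sinWeight L) L t)) * hid -
    (trigPoly (sinWeight L) L t * conj (trigPoly (sinWeight L) L t) *
        (2 * cos (π / (L + 1)) - z) + sin (π / (L + 1)) * conj (trigPoly (sinWeight L) L t) * z ^ L) *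
      e_mul_conj t

lemma cos_two_pi_mul_distNearestInt (x : ℝ) : cos (2 * π * distNearestInt x) = cos (2 * π * x) := by
  rw [distNearestInt, ← abs_of_pos two_pi_pos, ← abs_mul, cos_abs, abs_of_pos two_pi_pos,
    mul_sub, mul_comm _ (round x : ℝ), cos_sub_int_mul_two_pi]

lemma cos_two_pi_mul_add_sin_sq_le {L : ℕ} (hL : 0 < L) {x : ℝ}
    (hx : 1 / (L : ℝ) ≤ distNearestInt x) :
    cos (2 * π * x) + sin (π / (L + 1)) ^ 2 ≤ cos (π / (L + 1)) := by
  set ϑ := π / (L + 1) with hϑ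
  have hLpos : (0 : ℝ) < L := Nat.cast_pos.mpr hL
  have hhalf : distNearestInt x ≤ 1 / 2 := abs_sub_round x
  have hL2 : (2 : ℝ) ≤ L := by
    have := hx.trans hhalf
    rwa [one_div_le_one_div hLpos two_pos] at this
  have hcos_x : cos (2 * π * x) ≤ cos (2 * π / L) := by
    rw [← cos_two_pi_mul_distNearestInt]
    apply cos_le_cos_of_nonneg_of_le_pi (by positivity) (by nlinarith [pi_pos])
    rw [show 2 * π / L = 2 * π * (1 / L) by ring]
    gcongr
  have hcos_L : cos (2 * π / L) ≤ cos (2 * ϑ) := by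
    apply cos_le_cos_of_nonneg_of_le_pi (by positivity)
    · rw [div_le_iff₀ hLpos]; nlinarith [pi_pos]
    · rw [hϑ, mul_div_assoc']
      exact div_le_div_of_nonneg_left two_pi_pos.le hLpos (by linarith)
  have hϑ0 : 0 ≤ ϑ := by positivity
  have hcosϑ : 0 ≤ cos ϑ := cos_nonneg_of_mem_Icc ⟨by linarith [pi_pos], by
    rw [hϑ, div_le_div_iff_of_pos_left pi_pos (by linarith) two_pos]; linarith⟩
  nlinarith [cos_two_mul ϑ, sin_sq_add_cos_sq ϑ, cos_le_one ϑ]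

section Bounds

variable {ι : Type*} [Fintype ι] (x : ι → ℝ)

lemma sum_norm_expSum_neg_succ_add_sub (L : ℕ) :
    ∑ k ∈ range L, (‖expSum x (-(k + 1))‖ + ‖expSum x (L - k)‖) =
      2 * ∑ l ∈ Icc 1 L, ‖expSum x l‖ := by
  have hleft : ∑ k ∈ range L, ‖expSum x (-(k + 1))‖ = ∑ l ∈ Icc 1 L, ‖expSum x l‖ := by
    rw [sum_Icc_one_eq_sum_range (fun l ↦ ‖expSum x l‖)]
    simp only [norm_expSum_neg, Nat.cast_succ]
  have hright : ∑ k ∈ range L, ‖expSum x (L - k)‖ = ∑ l ∈ Icc 1 L, ‖expSum x l‖ := by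
    rw [← sum_range_sub_eq_sum_Icc (fun l ↦ ‖expSum x l‖)]
    exact sum_congr rfl fun k hk ↦ by rw [Nat.cast_sub (mem_range.mp hk).le]
  rw [sum_add_distrib, hleft, hright, two_mul]

lemma sum_two_cos_sub_mul_normSq_le (L : ℕ) :
    ∑ j, (2 * cos (π / (L + 1)) - 2 * cos (2 * π * x j)) *
        Complex.normSq (trigPoly (sinWeight L) L (x j)) ≤
      2 * sin (π / (L + 1)) * ∑ l ∈ Icc 1 L, ‖expSum x l‖ := by
  set W := ∑ k ∈ range L, (sinWeight L k : ℂ) * (expSum x (-(k + 1)) + expSum x (L - k))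
  have hsum : ((∑ j, (2 * cos (π / (L + 1)) - 2 * cos (2 * π * x j)) *
      Complex.normSq (trigPoly (sinWeight L) L (x j)) : ℝ) : ℂ) = -sin (π / (L + 1)) * W := by
    simp only [Complex.ofReal_sum, two_cos_sub_mul_normSq_trigPoly_sinWeight, ← mul_sum, W]
    rw [sum_comm]
    simp only [expSum, ← mul_sum, sum_add_distrib]
  have hsin : 0 ≤ sin (π / (L + 1)) := sin_nonneg_of_nonneg_of_le_pi (by positivity)
    (div_le_self pi_pos.le (by linarith [(L.cast_nonneg : (0 : ℝ) ≤ L)]))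
  have hW : ‖W‖ ≤ 2 * ∑ l ∈ Icc 1 L, ‖expSum x l‖ := by
    rw [← sum_norm_expSum_neg_succ_add_sub]
    refine (norm_sum_le _ _).trans (sum_le_sum fun k _ ↦ ?_)
    rw [norm_mul, Complex.norm_real, Real.norm_eq_abs]
    calc |sinWeight L k| * ‖expSum x (-(k + 1)) + expSum x (L - k)‖
        ≤ 1 * (‖expSum x (-(k + 1))‖ + ‖expSum x (L - k)‖) := by
          gcongr
          exacts [abs_sinWeight_le_one L k, norm_add_le _ _]
      _ = _ := one_mul _
  calc _ ≤ ‖((∑ j, (2 * cos (π / (L + 1)) - 2 * cos (2 * π * x j)) *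
        Complex.normSq (trigPoly (sinWeight L) L (x j)) : ℝ) : ℂ)‖ := by
        rw [Complex.norm_real, Real.norm_eq_abs]; exact le_abs_self _
    _ = sin (π / (L + 1)) * ‖W‖ := by
        rw [hsum, norm_mul, norm_neg, Complex.norm_real, Real.norm_of_nonneg hsin]
    _ ≤ _ := by rw [mul_assoc, mul_left_comm]; gcongr

lemma sin_mul_sum_normSq_trigPoly_le {L : ℕ} (hL : 0 < L)
    (hx : ∀ j, 1 / (L : ℝ) ≤ distNearestInt (x j)) :
    sin (π / (L + 1)) * ∑ j, Complex.normSq (trigPoly (sinWeight L) L (x j)) ≤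
      ∑ l ∈ Icc 1 L, ‖expSum x l‖ := by
  have hsin := sin_pi_div_pos hL
  have hweight : ∀ j, 2 * sin (π / (L + 1)) ^ 2 * Complex.normSq (trigPoly (sinWeight L) L (x j)) ≤
      (2 * cos (π / (L + 1)) - 2 * cos (2 * π * x j)) *
        Complex.normSq (trigPoly (sinWeight L) L (x j)) := fun j ↦ by
    gcongr
    · exact Complex.normSq_nonneg _
    · linarith [cos_two_pi_mul_add_sin_sq_le hL (hx j)]
  have h := (sum_le_sum fun j _ ↦ hweight j).trans (sum_two_cos_sub_mul_normSq_le x L)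
  rw [← mul_sum] at h
  nlinarith

end Bounds

theorem stmt_8 (L J : ℕ) (hL : 0 < L) (hJ : 0 < J) (x : Fin J → ℝ)
    (hx : ∀ j, 1 / (L : ℝ) ≤ distNearestInt (x j)) :
    (J : ℝ) / 6 < ∑ l ∈ Finset.Icc 1 L, ‖∑ j, e ((l : ℝ) * x j)‖ := by
  have hJpos : (0 : ℝ) < J := Nat.cast_pos.mpr hJ
  have hjordan := two_div_le_sin_pi_div hL
  have hupper := sin_mul_sum_normSq_trigPoly_le x hL hx
  have hlower := le_sum_normSq_trigPoly x L (abs_sinWeight_le_one L)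
  rw [sum_sinWeight_sq hL, Fintype.card_fin] at hlower
  change (J : ℝ) / 6 < ∑ l ∈ Icc 1 L, ‖expSum x l‖
  set s := sin (π / (L + 1))
  set σ := ∑ l ∈ Icc 1 L, ‖expSum x l‖
  have hs : 2 ≤ s * (L + 1) := by rwa [div_le_iff₀ (by positivity)] at hjordan
  have hs0 : 0 ≤ s := (sin_pi_div_pos hL).le
  have hcombined : s * (L + 1) * J ≤ 2 * (1 + 2 * L * s) * σ := by
    nlinarith [mul_le_mul_of_nonneg_left hlower hs0]
  -- σ ≤ J/6 would force 3 s (L + 1) ≤ 1 + 2 L s, i.e. s (L + 3) ≤ 1, against s (L + 1) ≥ 2.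
  by_contra! hσ
  nlinarith [mul_le_mul_of_nonneg_left hσ (by positivity : (0 : ℝ) ≤ 2 * (1 + 2 * L * s)),
    mul_le_mul_of_nonneg_left hs hJpos.le]
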